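/- arXiv:1906.06713 — 6 statements merged into one kernel-verified Lean document; each statement's English description precedes it below -/
import Mathlib

section
/- Let (b_{ij})_{1 ≤ i < j} be independent real random variables on a common probability space with E b_{ij} = 0, and suppose there exist a constant M > 0 and a real random variable X with E|X|⁴ < ∞ such that P(|b_{ij}| > t) ≤ M·P(|X| > t) for every t > 0 and every i < j. Then there exists a sequence of positive reals ε_n → 0 such that almost surely, for all but finitely many n, max_{1 ≤ i < j ≤ n} |b_{ij}| < ε_n·√n. -/
/-!
By the tail domination, a union bound over column `n` gives
`P(∃ i < n, |b i n| > c√n) ≤ M n P(|X| > c√n) ≤ M n P(n² < (|X|/c)⁴)`, and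
`∑ₙ n P(n² < Y) ≤ E Y`, so by Borel–Cantelli almost surely only finitely many columns exceed
`c√n`; the finitely many remaining entries are eventually below `c√n` too. Hence for every
`c > 0`, almost surely `max_{i<j≤n} |b i j| < c√n` eventually. A deterministic rate comes from a
diagonal argument: for `c = 1/(k+1)` pick `N_k` after which the bound fails with probability at
most `2⁻ᵏ`, and apply Borel–Cantelli once more, now along `k`.
-/

open MeasureTheory ProbabilityTheory Filter Topology
open scoped ENNReal

lemma tsum_ite_sq_lt_le (y : ℝ) :
    ∑' n : ℕ, (if (n : ℝ) ^ 2 < y then (n : ℝ≥0∞) else 0) ≤ ENNReal.ofReal y := by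
  rcases le_or_gt y 0 with hy | hy
  · have hzero : ∀ n : ℕ, (if (n : ℝ) ^ 2 < y then (n : ℝ≥0∞) else 0) = 0 := fun n =>
      if_neg (not_lt.2 (hy.trans (sq_nonneg _)))
    simp only [hzero, tsum_zero, zero_le]
  set m := ⌊√y⌋₊
  have hsupp : ∀ n ∉ Finset.range (m + 1), (if (n : ℝ) ^ 2 < y then (n : ℝ≥0∞) else 0) = 0 :=
    fun n hn => if_neg fun hlt =>
      hn (Finset.mem_range_succ_iff.2 (Nat.le_floor (Real.le_sqrt_of_sq_le hlt.le)))
  have hgauss : ∑ n ∈ Finset.range (m + 1), n ≤ m * m := by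
    have h := Finset.sum_range_id_mul_two (m + 1)
    simp only [Nat.add_sub_cancel] at h
    nlinarith
  have hm : (m : ℝ) * m ≤ y := by
    have hfl : (m : ℝ) ≤ √y := Nat.floor_le (Real.sqrt_nonneg y)
    nlinarith [Real.mul_self_sqrt hy.le, Real.sqrt_nonneg y, m.cast_nonneg (α := ℝ)]
  rw [tsum_eq_sum hsupp]
  calc ∑ n ∈ Finset.range (m + 1), (if (n : ℝ) ^ 2 < y then (n : ℝ≥0∞) else 0)
      ≤ ∑ n ∈ Finset.range (m + 1), (n : ℝ≥0∞) :=
        Finset.sum_le_sum fun n _ => by split_ifs <;> simp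
    _ = ENNReal.ofReal ((∑ n ∈ Finset.range (m + 1), n : ℕ) : ℝ) := by
        rw [ENNReal.ofReal_natCast, Nat.cast_sum]
    _ ≤ ENNReal.ofReal y := ENNReal.ofReal_le_ofReal (le_trans (by exact_mod_cast hgauss) hm)

lemma tsum_mul_measure_sq_lt_le_lintegral {Ω : Type*} [MeasurableSpace Ω] {μ : Measure Ω}
    {Y : Ω → ℝ} (hY : Measurable Y) :
    ∑' n : ℕ, (n : ℝ≥0∞) * μ {ω | (n : ℝ) ^ 2 < Y ω} ≤ ∫⁻ ω, ENNReal.ofReal (Y ω) ∂μ := by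
  have hA : ∀ n : ℕ, MeasurableSet {ω | (n : ℝ) ^ 2 < Y ω} := fun n =>
    measurableSet_lt measurable_const hY
  calc ∑' n : ℕ, (n : ℝ≥0∞) * μ {ω | (n : ℝ) ^ 2 < Y ω}
      = ∫⁻ ω, ∑' n : ℕ, {ω | (n : ℝ) ^ 2 < Y ω}.indicator (fun _ => (n : ℝ≥0∞)) ω ∂μ := by
        rw [lintegral_tsum fun n => (measurable_const.indicator (hA n)).aemeasurable]
        simp only [lintegral_indicator_const (hA _)]
    _ ≤ ∫⁻ ω, ENNReal.ofReal (Y ω) ∂μ := lintegral_mono fun ω => by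
        simpa only [Set.indicator_apply, Set.mem_ofPred_eq] using tsum_ite_sq_lt_le (Y ω)

lemma eventually_forall_lt_mul_sqrt_of_eventually_column (a : ℕ → ℕ → ℝ) {c : ℝ} (hc : 0 < c)
    (h : ∀ᶠ j in atTop, ∀ i < j, a i j ≤ c / 2 * √j) :
    ∀ᶠ n in atTop, ∀ i j, i < j → j ≤ n → a i j < c * √n := by
  obtain ⟨N, hN⟩ := eventually_atTop.1 h
  set S := ∑ p ∈ Finset.range N ×ˢ Finset.range N, |a p.1 p.2|
  have hgrow : Tendsto (fun n : ℕ => c * √n) atTop atTop :=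
    (Real.tendsto_sqrt_atTop.comp tendsto_natCast_atTop_atTop).const_mul_atTop hc
  filter_upwards [hgrow.eventually_gt_atTop S, eventually_gt_atTop 0] with n hSn hn i j hij hjn
  have hsqrt : 0 < √(n : ℝ) := Real.sqrt_pos.2 (by exact_mod_cast hn)
  rcases lt_or_ge j N with hjN | hNj
  · have hmem : (i, j) ∈ Finset.range N ×ˢ Finset.range N :=
      Finset.mem_product.2 ⟨Finset.mem_range.2 (hij.trans hjN), Finset.mem_range.2 hjN⟩
    have hle : |a i j| ≤ S :=
      Finset.single_le_sum (f := fun p : ℕ × ℕ => |a p.1 p.2|) (fun _ _ => abs_nonneg _) hmem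
    nlinarith [le_abs_self (a i j)]
  · have hsqrt_le : √(j : ℝ) ≤ √n := Real.sqrt_le_sqrt (by exact_mod_cast hjn)
    nlinarith [hN j hNj i hij]

lemma measure_mul_sqrt_lt_abs_le {Ω : Type*} [MeasurableSpace Ω] (μ : Measure Ω) (X : Ω → ℝ)
    {c : ℝ} (hc : 0 < c) (n : ℕ) :
    μ {ω | c * √n < |X ω|} ≤ μ {ω | (n : ℝ) ^ 2 < (|X ω| / c) ^ 4} := by
  refine measure_mono fun ω hω => ?_
  have hX : √n < |X ω| / c := (lt_div_iff₀ hc).2 (by rw [mul_comm]; exact hω)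
  have hsq : (n : ℝ) < (|X ω| / c) ^ 2 :=
    (Real.sqrt_lt' ((Real.sqrt_nonneg _).trans_lt hX)).1 hX
  show (n : ℝ) ^ 2 < (|X ω| / c) ^ 4
  nlinarith [n.cast_nonneg (α := ℝ)]

lemma ae_eventually_forall_abs_le_mul_sqrt {Ω : Type*} [MeasurableSpace Ω] {μ : Measure Ω}
    {b : ℕ → ℕ → Ω → ℝ} {M : ℝ} {X : Ω → ℝ} (hX : Measurable X)
    (hX4 : Integrable (fun ω => |X ω| ^ 4) μ)
    (htail : ∀ t : ℝ, 0 < t → ∀ i j, i < j →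
      μ {ω | t < |b i j ω|} ≤ ENNReal.ofReal M * μ {ω | t < |X ω|})
    {c : ℝ} (hc : 0 < c) :
    ∀ᵐ ω ∂μ, ∀ᶠ n in atTop, ∀ i < n, |b i n ω| ≤ c * √n := by
  set Y : Ω → ℝ := fun ω => (|X ω| / c) ^ 4
  have hY : Measurable Y := (hX.abs.div_const c).pow_const 4
  have hYint : Integrable Y μ := by
    refine (hX4.div_const (c ^ 4)).congr (ae_of_all _ fun ω => ?_)
    simp only [Y, div_pow]
  set s : ℕ → Set Ω := fun n => ⋃ i ∈ Finset.range n, {ω | c * √n < |b i n ω|}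
  have hcol : ∀ n : ℕ, μ (s n) ≤ ENNReal.ofReal M * ((n : ℝ≥0∞) * μ {ω | (n : ℝ) ^ 2 < Y ω}) := by
    intro n
    calc μ (s n) ≤ ∑ i ∈ Finset.range n, μ {ω | c * √n < |b i n ω|} :=
          measure_biUnion_finset_le _ _
      _ ≤ ∑ _i ∈ Finset.range n, ENNReal.ofReal M * μ {ω | (n : ℝ) ^ 2 < Y ω} := by
          refine Finset.sum_le_sum fun i hi => ?_
          have hin := Finset.mem_range.1 hi
          have hpos : 0 < c * √n :=
            mul_pos hc (Real.sqrt_pos.2 (by exact_mod_cast i.zero_le.trans_lt hin))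
          exact (htail _ hpos i n hin).trans
            (mul_le_mul_right (measure_mul_sqrt_lt_abs_le μ X hc n) _)
      _ = ENNReal.ofReal M * ((n : ℝ≥0∞) * μ {ω | (n : ℝ) ^ 2 < Y ω}) := by
          rw [Finset.sum_const, Finset.card_range, nsmul_eq_mul, mul_left_comm]
  have hsum : ∑' n, μ (s n) ≠ ∞ := by
    refine ne_top_of_le_ne_top ?_ ((ENNReal.tsum_le_tsum hcol).trans_eq ENNReal.tsum_mul_left)
    exact ENNReal.mul_ne_top ENNReal.ofReal_ne_top (ne_top_of_le_ne_top
      hYint.lintegral_lt_top.ne (tsum_mul_measure_sq_lt_le_lintegral hY))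
  filter_upwards [ae_eventually_notMem hsum] with ω hω
  filter_upwards [hω] with n hn i hi
  exact not_lt.1 fun hlt => hn (Set.mem_biUnion (Finset.mem_range.2 hi) hlt)

theorem exists_tendsto_zero_ae_eventually_mem {Ω : Type*} [MeasurableSpace Ω] {μ : Measure Ω}
    [IsFiniteMeasure μ] {s : ℕ → ℝ → Set Ω} (hs : ∀ n c, MeasurableSet (s n c))
    (h : ∀ c > 0, ∀ᵐ ω ∂μ, ∀ᶠ n in atTop, ω ∈ s n c) :
    ∃ ε : ℕ → ℝ, (∀ n, 0 < ε n) ∧ Tendsto ε atTop (𝓝 0) ∧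
      ∀ᵐ ω ∂μ, ∀ᶠ n in atTop, ω ∈ s n (ε n) := by
  set c : ℕ → ℝ := fun k => 1 / ((k : ℝ) + 1)
  set T : ℕ → ℕ → Set Ω := fun k N => ⋃ n ≥ N, (s n (c k))ᶜ
  have hT : ∀ k, Tendsto (fun N => μ (T k N)) atTop (𝓝 0) := by
    intro k
    have hnull : μ (⋂ N, T k N) = 0 := by
      refine measure_mono_null (fun ω hω => ?_) (ae_iff.1 (h (c k) (by positivity)))
      simp only [T, Set.mem_iInter, Set.mem_iUnion, Set.mem_compl_iff, exists_prop] at hω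
      exact not_eventually.2 (frequently_atTop.2 hω)
    rw [← hnull]
    refine tendsto_measure_iInter_atTop (fun N => ?_) (fun N N' hN => ?_) ⟨0, measure_ne_top μ _⟩
    · exact (MeasurableSet.biUnion (Set.to_countable _) fun n _ =>
        (hs n _).compl).nullMeasurableSet
    · exact Set.biUnion_subset_biUnion_left fun n hn => hN.trans hn
  have hsmall : ∀ k, ∀ᶠ N in atTop, μ (T k N) ≤ 2⁻¹ ^ k := fun k =>
    ((hT k).eventually_lt_const (ENNReal.pow_pos (by simp) k)).mono fun _ => le_of_lt
  obtain ⟨φ, hφ, hφT⟩ := extraction_forall_of_eventually hsmall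
  have hBC : ∀ᵐ ω ∂μ, ∀ᶠ k in atTop, ω ∉ T k (φ k) := by
    refine ae_eventually_notMem (ne_top_of_le_ne_top ?_ (ENNReal.tsum_le_tsum hφT))
    simp [ENNReal.tsum_geometric]
  set K : ℕ → ℕ := fun n => Nat.findGreatest (fun k => φ k ≤ n) n
  have hK : ∀ k n, φ k ≤ n → k ≤ K n := fun k n hkn =>
    Nat.le_findGreatest ((hφ.id_le k).trans hkn) hkn
  have hφK : ∀ k n, φ k ≤ n → φ (K n) ≤ n := fun k n hkn =>
    Nat.findGreatest_spec (P := fun k => φ k ≤ n) ((hφ.id_le k).trans hkn) hkn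
  refine ⟨fun n => c (K n), fun n => by positivity, ?_, ?_⟩
  · exact tendsto_one_div_add_atTop_nhds_zero_nat.comp
      (tendsto_atTop_atTop.2 fun k => ⟨φ k, fun n => hK k n⟩)
  · filter_upwards [hBC] with ω hω
    obtain ⟨k₀, hk₀⟩ := eventually_atTop.1 hω
    filter_upwards [eventually_ge_atTop (φ k₀)] with n hn
    have hgood := hk₀ (K n) (hK k₀ n hn)
    simp only [T, Set.mem_iUnion, Set.mem_compl_iff, not_exists, not_not] at hgood
    exact hgood n (hφK k₀ n hn)

theorem entrywise_little_o_sqrt_general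
    {Ω : Type*} [MeasureSpace Ω] [IsProbabilityMeasure (ℙ : Measure Ω)]
    (b : ℕ → ℕ → Ω → ℝ) (hmeas : ∀ i j, i < j → Measurable (b i j))
    (M : ℝ)
    (X : Ω → ℝ) (hXmeas : Measurable X)
    (hX4 : Integrable (fun ω => |X ω| ^ 4) ℙ)
    (htail : ∀ t : ℝ, 0 < t → ∀ i j, i < j →
      ℙ {ω | t < |b i j ω|} ≤ ENNReal.ofReal M * ℙ {ω | t < |X ω|}) :
    ∃ ε : ℕ → ℝ, (∀ n, 0 < ε n) ∧ Tendsto ε atTop (nhds 0) ∧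
      ∀ᵐ ω ∂ℙ, ∀ᶠ n : ℕ in atTop, ∀ i j : ℕ, i < j → j ≤ n →
        |b i j ω| < ε n * Real.sqrt n := by
  refine exists_tendsto_zero_ae_eventually_mem
    (s := fun n c => {ω | ∀ i j, i < j → j ≤ n → |b i j ω| < c * √n})
    (fun n c => ?_) fun c hc => ?_
  · simp only [Set.ofPred_forall]
    exact .iInter fun i => .iInter fun j => .iInter fun hij => .iInter fun _ =>
      measurableSet_lt (hmeas i j hij).abs measurable_const
  · filter_upwards [ae_eventually_forall_abs_le_mul_sqrt hXmeas hX4 htail (half_pos hc)] with ω hω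
    exact eventually_forall_lt_mul_sqrt_of_eventually_column (fun i j => |b i j ω|) hc hω

/-- If `(b i j)_{i<j}` are independent, centered random variables whose tails are uniformly
dominated by those of a random variable `X` with finite fourth moment, then there is a
sequence of positive reals `ε n → 0` such that almost surely, for all but finitely many `n`,
every entry `b i j` with `i < j ≤ n` satisfies `|b i j| < ε n * √n`. -/
theorem entrywise_little_o_sqrt
    {Ω : Type*} [MeasureSpace Ω] [IsProbabilityMeasure (ℙ : Measure Ω)]
    (b : ℕ → ℕ → Ω → ℝ) (hmeas : ∀ i j, i < j → Measurable (b i j))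
    (hcent : ∀ i j, i < j → ∫ ω, b i j ω ∂ℙ = 0)
    (M : ℝ) (hM : 0 < M)
    (X : Ω → ℝ) (hXmeas : Measurable X)
    (hX4 : Integrable (fun ω => |X ω| ^ 4) ℙ)
    (htail : ∀ t : ℝ, 0 < t → ∀ i j, i < j →
      ℙ {ω | t < |b i j ω|} ≤ ENNReal.ofReal M * ℙ {ω | t < |X ω|})
    (hindep : iIndepFun
      (fun p : {p : ℕ × ℕ // p.1 < p.2} => b p.1.1 p.1.2) ℙ) :
    ∃ ε : ℕ → ℝ, (∀ n, 0 < ε n) ∧ Tendsto ε atTop (nhds 0) ∧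
      ∀ᵐ ω ∂ℙ, ∀ᶠ n : ℕ in atTop, ∀ i j : ℕ, i < j → j ≤ n →
        |b i j ω| < ε n * Real.sqrt n :=
  entrywise_little_o_sqrt_general b hmeas M X hXmeas hX4 htail
end

section
/- Let X be a real random variable with E|X|⁴ < ∞ and let ε > 0. Then the series Σ_{m=1}^∞ 2^{2m} · P(|X| ≥ ε·2^{(m-1)/2}) converges; in fact Σ_{m=1}^∞ 2^{2m} · P(ε·2^{(m-1)/2} ≤ |X| < ε·2^{m/2}) ≤ 16 ε^{-4} E|X|⁴. -/
/-!
Put `Y = |X|⁴ / ε⁴`, so that `ε 2^{m/2} ≤ |X|` iff `4^m ≤ Y`. Pointwise, the indices `m`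
with `4^m ≤ Y` lie below the largest one, `M` say, so a geometric sum gives
`Σ_{4^m ≤ Y} 4^{m+1} ≤ 4^{M+2} / 3 ≤ (16/3) Y`. Integrating (Tonelli) bounds the whole
tail sum `Σ 4^{m+1} P(ε 2^{m/2} ≤ |X|)` by `(16/3) E Y`, and each dyadic band lies inside
its tail.
-/

open MeasureTheory ProbabilityTheory ENNReal

theorem sum_pow_le_of_forall_pow_le {q a : ℝ} (hq : 1 < q) (ha : 0 ≤ a) {s : Finset ℕ}
    (hs : ∀ m ∈ s, q ^ m ≤ a) : (q - 1) * ∑ m ∈ s, q ^ m ≤ q * a := by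
  rcases s.eq_empty_or_nonempty with rfl | hne
  · simp only [Finset.sum_empty, mul_zero]
    positivity
  set M := s.max' hne
  have hsub : s ⊆ Finset.range (M + 1) := fun m hm =>
    Finset.mem_range.2 (Nat.lt_succ_of_le (s.le_max' m hm))
  calc (q - 1) * ∑ m ∈ s, q ^ m ≤ (q - 1) * ∑ m ∈ Finset.range (M + 1), q ^ m :=
        mul_le_mul_of_nonneg_left
          (Finset.sum_le_sum_of_subset_of_nonneg hsub fun _ _ _ => by positivity) (by linarith)
    _ = q ^ (M + 1) - 1 := by rw [mul_comm, geom_sum_mul]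
    _ ≤ q * q ^ M := by rw [pow_succ']; linarith
    _ ≤ q * a := by gcongr; exact hs M (s.max'_mem hne)

theorem tsum_indicator_pow_succ_le {q a : ℝ} (hq : 1 < q) (ha : 0 ≤ a) :
    ∑' m : ℕ, {m : ℕ | q ^ m ≤ a}.indicator (fun m => ENNReal.ofReal (q ^ (m + 1))) m
      ≤ ENNReal.ofReal (q ^ 2 / (q - 1) * a) := by
  refine ENNReal.tsum_le_of_sum_range_le fun N => ?_
  simp only [Set.indicator_apply, Set.mem_ofPred_eq, ← Finset.sum_filter]
  rw [← ENNReal.ofReal_sum_of_nonneg fun _ _ => by positivity]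
  apply ENNReal.ofReal_le_ofReal
  have hgeom := sum_pow_le_of_forall_pow_le hq ha (s := (Finset.range N).filter (q ^ · ≤ a))
    fun m hm => (Finset.mem_filter.1 hm).2
  rw [div_mul_eq_mul_div, le_div_iff₀ (by linarith)]
  simp only [pow_succ, ← Finset.sum_mul]
  linarith [mul_le_mul_of_nonneg_left hgeom (by linarith : (0 : ℝ) ≤ q)]

theorem tsum_pow_succ_mul_measure_le_lintegral {Ω : Type*} [MeasurableSpace Ω] (μ : Measure Ω)
    {f : Ω → ℝ} (hf : Measurable f) (hf0 : 0 ≤ f) {q : ℝ} (hq : 1 < q) :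
    ∑' m : ℕ, ENNReal.ofReal (q ^ (m + 1)) * μ {ω | q ^ m ≤ f ω}
      ≤ ∫⁻ ω, ENNReal.ofReal (q ^ 2 / (q - 1) * f ω) ∂μ := by
  have hmeas (m : ℕ) : MeasurableSet {ω | q ^ m ≤ f ω} := measurableSet_le measurable_const hf
  calc ∑' m : ℕ, ENNReal.ofReal (q ^ (m + 1)) * μ {ω | q ^ m ≤ f ω}
      = ∫⁻ ω, ∑' m : ℕ,
          {ω | q ^ m ≤ f ω}.indicator (fun _ => ENNReal.ofReal (q ^ (m + 1))) ω ∂μ := by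
        rw [lintegral_tsum fun m => (measurable_const.indicator (hmeas m)).aemeasurable]
        simp only [lintegral_indicator_const (hmeas _)]
    _ ≤ ∫⁻ ω, ENNReal.ofReal (q ^ 2 / (q - 1) * f ω) ∂μ :=
        lintegral_mono fun ω => tsum_indicator_pow_succ_le hq (hf0 ω)

theorem summable_toReal_and_tsum_toReal_le {ι : Type*} {f : ι → ℝ≥0∞} {c : ℝ}
    (hc : 0 ≤ c) (h : ∑' i, f i ≤ ENNReal.ofReal c) :
    Summable (fun i => (f i).toReal) ∧ ∑' i, (f i).toReal ≤ c := by
  have hfin : ∑' i, f i ≠ ∞ := ne_top_of_le_ne_top ofReal_ne_top h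
  refine ⟨ENNReal.summable_toReal hfin, ?_⟩
  rw [← ENNReal.tsum_toReal_eq (ENNReal.ne_top_of_tsum_ne_top hfin)]
  exact ENNReal.toReal_le_of_le_ofReal hc h

theorem mul_two_rpow_half_le_iff {ε x : ℝ} (hε : 0 < ε) (hx : 0 ≤ x) (m : ℕ) :
    ε * (2 : ℝ) ^ ((m : ℝ) / 2) ≤ x ↔ (4 : ℝ) ^ m ≤ x ^ 4 / ε ^ 4 := by
  have hpow : (ε * (2 : ℝ) ^ ((m : ℝ) / 2)) ^ 4 = (4 : ℝ) ^ m * ε ^ 4 := by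
    rw [mul_pow, ← Real.rpow_mul_natCast zero_le_two,
      show (m : ℝ) / 2 * (4 : ℕ) = ((2 * m : ℕ) : ℝ) by push_cast; ring,
      Real.rpow_natCast, pow_mul]
    norm_num
    ring
  rw [le_div_iff₀ (by positivity), ← hpow,
    pow_le_pow_iff_left₀ (by positivity) hx four_ne_zero]

theorem fourth_moment_dyadic_tail_sum_general
    {Ω : Type*} [MeasureSpace Ω]
    (X : Ω → ℝ) (hXmeas : Measurable X)
    (hX4 : Integrable (fun ω => |X ω| ^ 4) ℙ)
    (ε : ℝ) (hε : 0 < ε) :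
    Summable (fun m : ℕ => (2 : ℝ) ^ (2 * (m + 1)) *
        ((ℙ : Measure Ω) {ω : Ω | ε * (2 : ℝ) ^ ((m : ℝ) / 2) ≤ |X ω|}).toReal) ∧
    ∑' m : ℕ, (2 : ℝ) ^ (2 * (m + 1)) *
        ((ℙ : Measure Ω) {ω : Ω | ε * (2 : ℝ) ^ ((m : ℝ) / 2) ≤ |X ω| ∧
                |X ω| < ε * (2 : ℝ) ^ (((m : ℝ) + 1) / 2)}).toReal
      ≤ 16 / ε ^ 4 * ∫ ω, |X ω| ^ 4 ∂(ℙ : Measure Ω) := by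
  have htail (m : ℕ) : {ω : Ω | ε * (2 : ℝ) ^ ((m : ℝ) / 2) ≤ |X ω|}
      = {ω | (4 : ℝ) ^ m ≤ |X ω| ^ 4 / ε ^ 4} :=
    Set.ext fun ω => mul_two_rpow_half_le_iff hε (abs_nonneg _) m
  have hC : 0 ≤ 16 / ε ^ 4 * ∫ ω, |X ω| ^ 4 ∂(ℙ : Measure Ω) := by positivity
  have hbound : ∑' m : ℕ, ENNReal.ofReal (4 ^ (m + 1)) *
      (ℙ : Measure Ω) {ω : Ω | ε * (2 : ℝ) ^ ((m : ℝ) / 2) ≤ |X ω|}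
      ≤ ENNReal.ofReal (16 / ε ^ 4 * ∫ ω, |X ω| ^ 4 ∂(ℙ : Measure Ω)) := by
    simp only [htail]
    calc _ ≤ ∫⁻ ω, ENNReal.ofReal (4 ^ 2 / (4 - 1) * (|X ω| ^ 4 / ε ^ 4))
            ∂(ℙ : Measure Ω) :=
          tsum_pow_succ_mul_measure_le_lintegral _ ((hXmeas.abs.pow_const 4).div_const _)
            (fun ω => by positivity) (by norm_num)
      _ = ENNReal.ofReal (∫ ω, 4 ^ 2 / (4 - 1) * (|X ω| ^ 4 / ε ^ 4) ∂(ℙ : Measure Ω)) :=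
          (ofReal_integral_eq_lintegral_ofReal ((hX4.div_const _).const_mul _)
            (ae_of_all _ fun ω => by positivity)).symm
      _ ≤ _ := by
          rw [integral_const_mul, integral_div, mul_comm_div _ (ε ^ 4)]
          exact ENNReal.ofReal_le_ofReal
            (mul_le_mul_of_nonneg_right (by norm_num) (by positivity))
  have hterm (m : ℕ) (s : Set Ω) : (ENNReal.ofReal (4 ^ (m + 1)) * (ℙ : Measure Ω) s).toReal
      = (2 : ℝ) ^ (2 * (m + 1)) * ((ℙ : Measure Ω) s).toReal := by
    rw [ENNReal.toReal_mul, ENNReal.toReal_ofReal (by positivity), pow_mul]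
    norm_num
  have hband : ∑' m : ℕ, ENNReal.ofReal (4 ^ (m + 1)) *
      (ℙ : Measure Ω) {ω : Ω | ε * (2 : ℝ) ^ ((m : ℝ) / 2) ≤ |X ω| ∧
        |X ω| < ε * (2 : ℝ) ^ (((m : ℝ) + 1) / 2)}
      ≤ ENNReal.ofReal (16 / ε ^ 4 * ∫ ω, |X ω| ^ 4 ∂(ℙ : Measure Ω)) :=
    (ENNReal.tsum_le_tsum fun m => by gcongr; exact And.left).trans hbound
  refine ⟨?_, ?_⟩
  · simpa only [hterm] using (summable_toReal_and_tsum_toReal_le hC hbound).1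
  · simpa only [hterm] using (summable_toReal_and_tsum_toReal_le hC hband).2

/-- For a random variable `X` with finite fourth moment and any `ε > 0`, the series
`Σ_{m=1}^∞ 2^(2m) P(|X| ≥ ε 2^((m-1)/2))` converges, and in fact
`Σ_{m=1}^∞ 2^(2m) P(ε 2^((m-1)/2) ≤ |X| < ε 2^(m/2)) ≤ 16 ε⁻⁴ E|X|⁴`.
(The index `m ≥ 1` is written below as `m + 1` for `m : ℕ`, so `(m+1-1)/2 = m/2`.) -/
theorem fourth_moment_dyadic_tail_sum
    {Ω : Type*} [MeasureSpace Ω] [IsProbabilityMeasure (ℙ : Measure Ω)]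
    (X : Ω → ℝ) (hXmeas : Measurable X)
    (hX4 : Integrable (fun ω => |X ω| ^ 4) ℙ)
    (ε : ℝ) (hε : 0 < ε) :
    Summable (fun m : ℕ => (2 : ℝ) ^ (2 * (m + 1)) *
        ((ℙ : Measure Ω) {ω : Ω | ε * (2 : ℝ) ^ ((m : ℝ) / 2) ≤ |X ω|}).toReal) ∧
    ∑' m : ℕ, (2 : ℝ) ^ (2 * (m + 1)) *
        ((ℙ : Measure Ω) {ω : Ω | ε * (2 : ℝ) ^ ((m : ℝ) / 2) ≤ |X ω| ∧
                |X ω| < ε * (2 : ℝ) ^ (((m : ℝ) + 1) / 2)}).toReal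
      ≤ 16 / ε ^ 4 * ∫ ω, |X ω| ^ 4 ∂(ℙ : Measure Ω) :=
  fourth_moment_dyadic_tail_sum_general X hXmeas hX4 ε hε
end

section
/- Let n ≥ K ≥ 1, let g : {1,…,n} → {1,…,K} be surjective, and let θ ∈ ℝⁿ have θ(i) > 0 for all i. Define θ_k ∈ ℝⁿ by θ_k(i) = θ(i) if g(i) = k and 0 otherwise, f̄_k = θ_k/‖θ_k‖ and β_k = ‖θ_k‖²/‖θ‖². Let P be a symmetric K×K real matrix and let P̄ be the K×K matrix with entries P̄_{k₁k₂} = √(β_{k₁}β_{k₂})·P_{k₁k₂}, with spectral decomposition P̄ = Σ_{i=1}^K λ̄_i q̄_i q̄_iᵀ where q̄_1,…,q̄_K are orthonormal. Define the n×n matrix M with entries M(i,j) = θ(i)θ(j)·P_{g(i)g(j)} and the vectors q_i = Σ_{k=1}^K q̄_i(k)·f̄_k for i = 1,…,K. Then q_1,…,q_K are orthonormal, M·q_i = (‖θ‖²·λ̄_i)·q_i for each i ≤ K, and M = Σ_{i=1}^K (‖θ‖²·λ̄_i) q_i q_iᵀ (so M has rank at most K). -/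
open Finset Matrix

/-!
Let `Φ` be the `K × n` matrix whose rows are the `f̄ₖ` and `Q` the `K × K` matrix whose rows are
the `q̄ᵢ`. The `f̄ₖ` have disjoint supports, so `Φ Φᵀ = 1`, and entrywise `M = ‖θ‖² Φᵀ P̄ Φ`.
Substituting `P̄ = Qᵀ diag(λ̄) Q` gives `M = Uᵀ diag(‖θ‖² λ̄) U` for `U = QΦ`, whose rows are the
`qᵢ` and satisfy `U Uᵀ = 1`; orthonormality, the eigen-equations and `rank M ≤ K` follow.
-/

namespace Matrix

variable {ι m R : Type*} [CommRing R]

theorem mul_transpose_eq_one_iff [Fintype m] [DecidableEq ι] (U : Matrix ι m R) :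
    U * Uᵀ = 1 ↔ ∀ i j, U i ⬝ᵥ U j = if i = j then 1 else 0 := by
  simp only [← Matrix.ext_iff, Matrix.one_apply]
  rfl

theorem transpose_mul_diagonal_mul_apply [Fintype ι] [DecidableEq ι] (U : Matrix ι m R)
    (d : ι → R) (a b : m) :
    (Uᵀ * diagonal d * U) a b = ∑ i, d i * U i a * U i b := by
  rw [mul_apply]
  exact sum_congr rfl fun i _ => by rw [mul_diagonal, transpose_apply]; ring

theorem transpose_mul_diagonal_mul_mulVec_row [Fintype ι] [Fintype m] [DecidableEq ι]
    {U : Matrix ι m R} (hU : U * Uᵀ = 1) (d : ι → R) (i : ι) :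
    (Uᵀ * diagonal d * U) *ᵥ U i = d i • U i := by
  have hcols : Uᵀ * diagonal d * U * Uᵀ = Uᵀ * diagonal d := by
    rw [Matrix.mul_assoc, hU, Matrix.mul_one]
  ext a
  have h := congrFun (congrFun hcols a) i
  rw [mul_apply, mul_diagonal] at h
  simpa only [mulVec, dotProduct, Pi.smul_apply, smul_eq_mul, transpose_apply, mul_comm (d i)]
    using h

theorem rank_transpose_mul_diagonal_mul_le [Fintype ι] [Fintype m] [DecidableEq ι]
    [StrongRankCondition R] (U : Matrix ι m R) (d : ι → R) :
    (Uᵀ * diagonal d * U).rank ≤ Fintype.card ι :=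
  (rank_mul_le_right _ _).trans (rank_le_card_height U)

theorem transpose_mul_mul_apply_of_eq_ite {κ : Type*} [Fintype ι] [Fintype κ] [DecidableEq κ]
    {Φ : Matrix κ ι R} {g : ι → κ} {w : ι → R}
    (hΦ : ∀ k i, Φ k i = if g i = k then w i else 0)
    (A : Matrix κ κ R) (a b : ι) : (Φᵀ * A * Φ) a b = w a * A (g a) (g b) * w b := by
  simp [mul_apply, hΦ, ite_mul, mul_ite]

end Matrix

noncomputable section BlockModel

variable {ι κ : Type*} [Fintype ι] [DecidableEq κ] (g : ι → κ) (θ : ι → ℝ)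

def blockVec (k : κ) (i : ι) : ℝ := if g i = k then θ i else 0

def blockMass (k : κ) : ℝ := ∑ i, blockVec g θ k i ^ 2

def unitBlockVec (k : κ) (i : ι) : ℝ := blockVec g θ k i / √(blockMass g θ k)

def blockWeight (k : κ) : ℝ := blockMass g θ k / ∑ i, θ i ^ 2

variable {g θ}

theorem blockMass_pos (hg : Function.Surjective g) (hθ : ∀ i, θ i ≠ 0) (k : κ) :
    0 < blockMass g θ k := by
  obtain ⟨i, rfl⟩ := hg k
  refine sum_pos' (fun x _ => sq_nonneg _) ⟨i, mem_univ i, ?_⟩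
  rw [blockVec, if_pos rfl]
  exact pow_two_pos_of_ne_zero (hθ i)

theorem blockVec_dotProduct (k l : κ) :
    blockVec g θ k ⬝ᵥ blockVec g θ l = if k = l then blockMass g θ k else 0 := by
  split_ifs with hkl
  · subst hkl
    exact sum_congr rfl fun i _ => (sq _).symm
  · refine sum_eq_zero fun i _ => ?_
    unfold blockVec
    split_ifs with hk hl
    · exact absurd (hk.symm.trans hl) hkl
    all_goals simp

theorem unitBlockVec_apply (k : κ) (i : ι) :
    unitBlockVec g θ k i = if g i = k then θ i / √(blockMass g θ (g i)) else 0 := by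
  unfold unitBlockVec blockVec
  split_ifs with h
  · rw [h]
  · exact zero_div _

theorem unitBlockVec_orthonormal (hg : Function.Surjective g) (hθ : ∀ i, θ i ≠ 0) :
    of (unitBlockVec g θ) * (of (unitBlockVec g θ))ᵀ = 1 := by
  rw [mul_transpose_eq_one_iff]
  intro k l
  change unitBlockVec g θ k ⬝ᵥ unitBlockVec g θ l = _
  have hdiv : unitBlockVec g θ k ⬝ᵥ unitBlockVec g θ l
      = (blockVec g θ k ⬝ᵥ blockVec g θ l) / (√(blockMass g θ k) * √(blockMass g θ l)) := by
    simp only [dotProduct, unitBlockVec, sum_div]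
    exact sum_congr rfl fun i _ => div_mul_div_comm _ _ _ _
  rw [hdiv, blockVec_dotProduct]
  split_ifs with hkl
  · subst hkl
    rw [Real.mul_self_sqrt (blockMass_pos hg hθ k).le, div_self (blockMass_pos hg hθ k).ne']
  · exact zero_div _

theorem eq_smul_transpose_mul_mul_unitBlockVec [Fintype κ] (hg : Function.Surjective g)
    (hθ : ∀ i, θ i ≠ 0) {P Pbar : Matrix κ κ ℝ}
    (hPbar : ∀ k l, Pbar k l = √(blockWeight g θ k * blockWeight g θ l) * P k l)
    {M : Matrix ι ι ℝ} (hM : ∀ a b, M a b = θ a * θ b * P (g a) (g b)) :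
    M = (∑ i, θ i ^ 2) • ((of (unitBlockVec g θ))ᵀ * Pbar * of (unitBlockVec g θ)) := by
  ext a b
  have hT : 0 < ∑ i, θ i ^ 2 :=
    sum_pos' (fun i _ => sq_nonneg _) ⟨a, mem_univ a, pow_two_pos_of_ne_zero (hθ a)⟩
  have ha := blockMass_pos hg hθ (g a)
  have hb := blockMass_pos hg hθ (g b)
  have hsqrt : √(blockWeight g θ (g a) * blockWeight g θ (g b))
      = √(blockMass g θ (g a)) * √(blockMass g θ (g b)) / ∑ i, θ i ^ 2 := by
    rw [blockWeight, blockWeight, div_mul_div_comm, Real.sqrt_div' _ (by positivity),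
      Real.sqrt_mul_self hT.le, Real.sqrt_mul ha.le]
  rw [hM, Matrix.smul_apply,
    transpose_mul_mul_apply_of_eq_ite (Φ := of (unitBlockVec g θ)) unitBlockVec_apply, hPbar,
    hsqrt, smul_eq_mul]
  field_simp

end BlockModel

theorem dcbm_population_eigen_transfer_general
    (n K : ℕ)
    (g : Fin n → Fin K) (hg : Function.Surjective g)
    (θ : Fin n → ℝ) (hθ : ∀ i, 0 < θ i)
    -- the restricted degree vectors, their normalizations and weights
    (θk : Fin K → Fin n → ℝ)
    (hθk : ∀ k i, θk k i = if g i = k then θ i else 0)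
    (fbar : Fin K → Fin n → ℝ)
    (hfbar : ∀ k i, fbar k i = θk k i / Real.sqrt (∑ x, θk k x ^ 2))
    (β : Fin K → ℝ) (hβ : ∀ k, β k = (∑ x, θk k x ^ 2) / (∑ x, θ x ^ 2))
    -- the community-wise matrix and its rescaling
    (P : Matrix (Fin K) (Fin K) ℝ)
    (Pbar : Matrix (Fin K) (Fin K) ℝ)
    (hPbar : ∀ k₁ k₂, Pbar k₁ k₂ = Real.sqrt (β k₁ * β k₂) * P k₁ k₂)
    -- spectral decomposition of P̄ with orthonormal eigenvectors
    (lamb : Fin K → ℝ) (qb : Fin K → Fin K → ℝ)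
    (hqbortho : ∀ i j, (∑ k, qb i k * qb j k) = if i = j then (1 : ℝ) else 0)
    (hdecomp : ∀ k₁ k₂, Pbar k₁ k₂ = ∑ i, lamb i * qb i k₁ * qb i k₂)
    -- the population matrix and the transferred eigenvectors
    (M : Matrix (Fin n) (Fin n) ℝ) (hM : ∀ i j, M i j = θ i * θ j * P (g i) (g j))
    (q : Fin K → Fin n → ℝ) (hq : ∀ i x, q i x = ∑ k, qb i k * fbar k x) :
    (∀ i j, (∑ x, q i x * q j x) = if i = j then (1 : ℝ) else 0) ∧
    (∀ i, M *ᵥ q i = ((∑ x, θ x ^ 2) * lamb i) • q i) ∧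
    (∀ a b, M a b = ∑ i, (∑ x, θ x ^ 2) * lamb i * q i a * q i b) ∧
    M.rank ≤ K := by
  obtain rfl : θk = blockVec g θ := funext₂ hθk
  obtain rfl : fbar = unitBlockVec g θ := funext₂ hfbar
  obtain rfl : β = blockWeight g θ := funext hβ
  have hθ₀ : ∀ i, θ i ≠ 0 := fun i => (hθ i).ne'
  set Φ : Matrix (Fin K) (Fin n) ℝ := of (unitBlockVec g θ)
  set Q : Matrix (Fin K) (Fin K) ℝ := of qb
  have hQ : Q * Qᵀ = 1 := (mul_transpose_eq_one_iff Q).2 hqbortho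
  have hU : Q * Φ * (Q * Φ)ᵀ = 1 := by
    rw [transpose_mul, Matrix.mul_assoc, ← Matrix.mul_assoc Φ, unitBlockVec_orthonormal hg hθ₀,
      Matrix.one_mul, hQ]
  obtain rfl : q = Q * Φ := funext₂ fun i x => by simp only [hq, mul_apply]; rfl
  have hPbarQ : Pbar = Qᵀ * diagonal lamb * Q := by
    ext k₁ k₂
    rw [hdecomp, transpose_mul_diagonal_mul_apply]
    rfl
  have hMQΦ : M = (Q * Φ)ᵀ * diagonal ((∑ x, θ x ^ 2) • lamb) * (Q * Φ) := by
    rw [eq_smul_transpose_mul_mul_unitBlockVec hg hθ₀ hPbar hM, hPbarQ]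
    simp only [transpose_mul, diagonal_smul, Matrix.smul_mul, Matrix.mul_smul, Matrix.mul_assoc]
    rfl
  refine ⟨(mul_transpose_eq_one_iff _).1 hU, fun i => ?_, fun a b => ?_, ?_⟩
  · rw [hMQΦ, transpose_mul_diagonal_mul_mulVec_row hU]
    rfl
  · rw [hMQΦ, transpose_mul_diagonal_mul_apply]
    rfl
  · simpa only [hMQΦ, Fintype.card_fin] using rank_transpose_mul_diagonal_mul_le (Q * Φ) _

/-- **Eigen-transfer for the degree corrected block model population matrix.**
If `M(i,j) = θ(i)θ(j) P (g i) (g j)` and `P̄` is the rescaled `K × K` matrix with spectral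
decomposition `P̄ = Σ λ̄ᵢ q̄ᵢ q̄ᵢᵀ`, then the vectors `qᵢ = Σₖ q̄ᵢ(k) f̄ₖ` are orthonormal
eigenvectors of `M` with eigenvalues `‖θ‖² λ̄ᵢ`, and `M = Σᵢ (‖θ‖² λ̄ᵢ) qᵢ qᵢᵀ`
(so `M` has rank at most `K`). -/
theorem dcbm_population_eigen_transfer
    (n K : ℕ) (hK : 1 ≤ K) (hKn : K ≤ n)
    (g : Fin n → Fin K) (hg : Function.Surjective g)
    (θ : Fin n → ℝ) (hθ : ∀ i, 0 < θ i)
    -- the restricted degree vectors, their normalizations and weights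
    (θk : Fin K → Fin n → ℝ)
    (hθk : ∀ k i, θk k i = if g i = k then θ i else 0)
    (fbar : Fin K → Fin n → ℝ)
    (hfbar : ∀ k i, fbar k i = θk k i / Real.sqrt (∑ x, θk k x ^ 2))
    (β : Fin K → ℝ) (hβ : ∀ k, β k = (∑ x, θk k x ^ 2) / (∑ x, θ x ^ 2))
    -- the community-wise matrix and its rescaling
    (P : Matrix (Fin K) (Fin K) ℝ) (hPsymm : P.IsSymm)
    (Pbar : Matrix (Fin K) (Fin K) ℝ)
    (hPbar : ∀ k₁ k₂, Pbar k₁ k₂ = Real.sqrt (β k₁ * β k₂) * P k₁ k₂)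
    -- spectral decomposition of P̄ with orthonormal eigenvectors
    (lamb : Fin K → ℝ) (qb : Fin K → Fin K → ℝ)
    (hqbortho : ∀ i j, (∑ k, qb i k * qb j k) = if i = j then (1 : ℝ) else 0)
    (hdecomp : ∀ k₁ k₂, Pbar k₁ k₂ = ∑ i, lamb i * qb i k₁ * qb i k₂)
    -- the population matrix and the transferred eigenvectors
    (M : Matrix (Fin n) (Fin n) ℝ) (hM : ∀ i j, M i j = θ i * θ j * P (g i) (g j))
    (q : Fin K → Fin n → ℝ) (hq : ∀ i x, q i x = ∑ k, qb i k * fbar k x) :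
    (∀ i j, (∑ x, q i x * q j x) = if i = j then (1 : ℝ) else 0) ∧
    (∀ i, M *ᵥ q i = ((∑ x, θ x ^ 2) * lamb i) • q i) ∧
    (∀ a b, M a b = ∑ i, (∑ x, θ x ^ 2) * lamb i * q i a * q i b) ∧
    M.rank ≤ K :=
  dcbm_population_eigen_transfer_general n K g hg θ hθ θk hθk fbar hfbar β hβ P Pbar hPbar lamb qb
    hqbortho hdecomp M hM q hq
end

section
/- Let n ≥ K ≥ 1, let g : {1,…,n} → {1,…,K} be surjective, let θ ∈ ℝⁿ have θ(i) > 0 for all i, set θ_k(i) = θ(i)·1{g(i)=k}, f̄_k = θ_k/‖θ_k‖, β_k = ‖θ_k‖²/‖θ‖², let P be a symmetric K×K real matrix, P̄_{k₁k₂} = √(β_{k₁}β_{k₂})P_{k₁k₂} with orthonormal eigenvectors q̄_1,…,q̄_K, and define the population eigenvectors q_ζ = Σ_{k=1}^K q̄_ζ(k) f̄_k and R_ζ(i) = q_ζ(i)/√(Σ_{ω=1}^K q_ω(i)²) for ζ = 1,…,K and i = 1,…,n. Then for any two nodes i ≠ j with g(i) ≠ g(j) there exists ζ ∈ {1,…,K}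 such that R_ζ(i) ≠ R_ζ(j); equivalently, whenever R_ζ(j) ≠ 0, the ratio RR_ζ(i,j) = R_ζ(i)/R_ζ(j) is not equal to 1 for some ζ. -/
open Finset Matrix

/-- **Separation of communities by ratios of population eigenvectors.** With `q` the transferred
orthonormal eigenvectors of the DCBM population matrix and
`R ζ i = q ζ i / √(Σ_ω q ω i ²)` the entries of the row-normalized eigenvector matrix, any two
nodes in different communities are separated: some coordinate `ζ` has `R ζ i ≠ R ζ j`;
equivalently, for some `ζ` with `R ζ j ≠ 0` the ratio `R ζ i / R ζ j` is not `1`. -/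
theorem dcbm_population_ratio_separation
    (n K : ℕ) (hK : 1 ≤ K) (hKn : K ≤ n)
    (g : Fin n → Fin K) (hg : Function.Surjective g)
    (θ : Fin n → ℝ) (hθ : ∀ i, 0 < θ i)
    -- the restricted degree vectors, their normalizations and weights
    (θk : Fin K → Fin n → ℝ)
    (hθk : ∀ k i, θk k i = if g i = k then θ i else 0)
    (fbar : Fin K → Fin n → ℝ)
    (hfbar : ∀ k i, fbar k i = θk k i / Real.sqrt (∑ x, θk k x ^ 2))
    (β : Fin K → ℝ) (hβ : ∀ k, β k = (∑ x, θk k x ^ 2) / (∑ x, θ x ^ 2))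
    -- the community-wise matrix and its rescaling
    (P : Matrix (Fin K) (Fin K) ℝ) (hPsymm : P.IsSymm)
    (Pbar : Matrix (Fin K) (Fin K) ℝ)
    (hPbar : ∀ k₁ k₂, Pbar k₁ k₂ = Real.sqrt (β k₁ * β k₂) * P k₁ k₂)
    -- spectral decomposition of P̄ with orthonormal eigenvectors
    (lamb : Fin K → ℝ) (qb : Fin K → Fin K → ℝ)
    (hqbortho : ∀ i j, (∑ k, qb i k * qb j k) = if i = j then (1 : ℝ) else 0)
    (hdecomp : ∀ k₁ k₂, Pbar k₁ k₂ = ∑ i, lamb i * qb i k₁ * qb i k₂)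
    -- the population eigenvectors
    (q : Fin K → Fin n → ℝ) (hq : ∀ i x, q i x = ∑ k, qb i k * fbar k x)
    -- the row-normalized eigenvector entries
    (R : Fin K → Fin n → ℝ)
    (hR : ∀ ζ i, R ζ i = q ζ i / Real.sqrt (∑ ω, q ω i ^ 2)) :
    ∀ i j : Fin n, i ≠ j → g i ≠ g j →
      (∃ ζ : Fin K, R ζ i ≠ R ζ j) ∧
      (∃ ζ : Fin K, R ζ j ≠ 0 ∧ R ζ i / R ζ j ≠ 1) := by

  -- column orthonormality of qb
  have hcol : ∀ k l, (∑ ω, qb ω k * qb ω l) = if k = l then (1:ℝ) else 0 := by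
    set A : Matrix (Fin K) (Fin K) ℝ := Matrix.of qb with hAdef
    have hA : A * Aᵀ = 1 := by
      ext i j
      simp [Matrix.mul_apply, Matrix.transpose_apply, A, hqbortho, Matrix.one_apply]
    have hA' : Aᵀ * A = 1 := mul_eq_one_comm.mp hA
    intro k l
    have := congrFun (congrFun hA' k) l
    simpa [Matrix.mul_apply, Matrix.transpose_apply, Matrix.one_apply, A] using this
  -- positivity of the squared norms
  have hS : ∀ k, 0 < ∑ x, θk k x ^ 2 := by
    intro k
    obtain ⟨x, hx⟩ := hg k
    refine Finset.sum_pos' (fun i _ => sq_nonneg _) ⟨x, Finset.mem_univ x, ?_⟩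
    rw [hθk, if_pos hx]
    exact pow_pos (hθ x) 2
  set c : Fin n → ℝ := fun i => θ i / Real.sqrt (∑ x, θk (g i) x ^ 2) with hcdef
  have hc : ∀ i, 0 < c i := fun i =>
    div_pos (hθ i) (Real.sqrt_pos.mpr (hS (g i)))
  have hqval : ∀ ζ i, q ζ i = qb ζ (g i) * c i := by
    intro ζ i
    rw [hq]
    have hterm : ∀ k ∈ Finset.univ, qb ζ k * fbar k i =
        if g i = k then qb ζ k * (θ i / Real.sqrt (∑ x, θk k x ^ 2)) else 0 := by
      intro k _
      rw [hfbar, hθk]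
      split <;> simp [mul_div_assoc]
    rw [Finset.sum_congr rfl hterm, Finset.sum_ite_eq]
    simp [c, mul_div_assoc]
  have hsum : ∀ i, (∑ ω, q ω i ^ 2) = c i ^ 2 := by
    intro i
    have h1 : (∑ ω, qb ω (g i) * qb ω (g i)) = 1 := by simpa using hcol (g i) (g i)
    calc (∑ ω, q ω i ^ 2) = (∑ ω, qb ω (g i) * qb ω (g i)) * c i ^ 2 := by
          rw [Finset.sum_mul]
          exact Finset.sum_congr rfl fun ω _ => by rw [hqval]; ring
      _ = c i ^ 2 := by rw [h1, one_mul]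
  have hRval : ∀ ζ i, R ζ i = qb ζ (g i) := by
    intro ζ i
    rw [hR, hqval, hsum, Real.sqrt_sq (hc i).le, mul_div_assoc, div_self (hc i).ne',
      mul_one]
  intro i j hij hgij
  have key : ∃ ζ, qb ζ (g j) ≠ 0 ∧ qb ζ (g i) ≠ qb ζ (g j) := by
    by_contra h
    push_neg at h
    have h0 : (∑ ω, qb ω (g i) * qb ω (g j)) = 0 := by
      rw [hcol, if_neg hgij]
    have h1 : (∑ ω, qb ω (g j) * qb ω (g j)) = 1 := by simpa using hcol (g j) (g j)
    have heq : ∀ ω ∈ Finset.univ, qb ω (g i) * qb ω (g j) = qb ω (g j) * qb ω (g j) := by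
      intro ω _
      by_cases hz : qb ω (g j) = 0
      · simp [hz]
      · rw [h ω hz]
    rw [Finset.sum_congr rfl heq, h1] at h0
    exact one_ne_zero h0
  obtain ⟨ζ, hz, hne⟩ := key
  refine ⟨⟨ζ, ?_⟩, ⟨ζ, ?_, ?_⟩⟩
  · rw [hRval, hRval]; exact hne
  · rw [hRval]; exact hz
  · rw [hRval, hRval]
    exact fun h => hne (by rwa [div_eq_one_iff_eq hz] at h)
end

section
/- Let n ≥ K ≥ 1, let g : {1,…,n} → {1,…,K} be surjective, let θ ∈ ℝⁿ have θ(i) > 0 for all i, set θ_k(i) = θ(i)·1{g(i)=k}, f̄_k = θ_k/‖θ_k‖, β_k = ‖θ_k‖²/‖θ‖², let P be a symmetric K×K real matrix, P̄_{k₁k₂} = √(β_{k₁}β_{k₂})P_{k₁k₂} with orthonormal eigenvectors q̄_1,…,q̄_K, and define the population eigenvectors q_ζ = Σ_{k=1}^K q̄_ζ(k) f̄_k and R_ζ(i) = q_ζ(i)/√(Σ_{ω=1}^K q_ω(i)²). Then for every i with g(i) = k and every ζ ∈ {1,…,K}, R_ζ(i) = q̄_ζ(k). In particular R_ζ(i)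 does not depend on i itself or on θ(i), only on the community label g(i), so R_ζ(i) = R_ζ(j) whenever g(i) = g(j). -/
open Finset Matrix

/-- **The normalized population eigenvector entries depend only on the community label.**
With `q` the transferred orthonormal eigenvectors of the DCBM population matrix and
`R ζ i = q ζ i / √(Σ_ω q ω i ²)`, one has `R ζ i = q̄ ζ (g i)` for every node `i`; in
particular `R ζ i = R ζ j` whenever `g i = g j`. -/
theorem dcbm_population_ratio_community_constant
    (n K : ℕ) (hK : 1 ≤ K) (hKn : K ≤ n)
    (g : Fin n → Fin K) (hg : Function.Surjective g)
    (θ : Fin n → ℝ) (hθ : ∀ i, 0 < θ i)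
    -- the restricted degree vectors, their normalizations and weights
    (θk : Fin K → Fin n → ℝ)
    (hθk : ∀ k i, θk k i = if g i = k then θ i else 0)
    (fbar : Fin K → Fin n → ℝ)
    (hfbar : ∀ k i, fbar k i = θk k i / Real.sqrt (∑ x, θk k x ^ 2))
    (β : Fin K → ℝ) (hβ : ∀ k, β k = (∑ x, θk k x ^ 2) / (∑ x, θ x ^ 2))
    -- the community-wise matrix and its rescaling
    (P : Matrix (Fin K) (Fin K) ℝ) (hPsymm : P.IsSymm)
    (Pbar : Matrix (Fin K) (Fin K) ℝ)
    (hPbar : ∀ k₁ k₂, Pbar k₁ k₂ = Real.sqrt (β k₁ * β k₂) * P k₁ k₂)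
    -- spectral decomposition of P̄ with orthonormal eigenvectors
    (lamb : Fin K → ℝ) (qb : Fin K → Fin K → ℝ)
    (hqbortho : ∀ i j, (∑ k, qb i k * qb j k) = if i = j then (1 : ℝ) else 0)
    (hdecomp : ∀ k₁ k₂, Pbar k₁ k₂ = ∑ i, lamb i * qb i k₁ * qb i k₂)
    -- the population eigenvectors
    (q : Fin K → Fin n → ℝ) (hq : ∀ i x, q i x = ∑ k, qb i k * fbar k x)
    -- the row-normalized eigenvector entries
    (R : Fin K → Fin n → ℝ)
    (hR : ∀ ζ i, R ζ i = q ζ i / Real.sqrt (∑ ω, q ω i ^ 2)) :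
    (∀ (i : Fin n) (k : Fin K), g i = k → ∀ ζ : Fin K, R ζ i = qb ζ k) ∧
    (∀ i j : Fin n, g i = g j → ∀ ζ : Fin K, R ζ i = R ζ j) := by
  -- positivity of the community norms
  have hS : ∀ k : Fin K, 0 < ∑ x, θk k x ^ 2 := by
    intro k
    obtain ⟨i, hi⟩ := hg k
    have hpos : 0 < θk k i ^ 2 := by
      rw [hθk, if_pos hi]; exact pow_pos (hθ i) 2
    exact Finset.sum_pos' (fun x _ => sq_nonneg _) ⟨i, Finset.mem_univ i, hpos⟩
  have hsqrt : ∀ k : Fin K, 0 < Real.sqrt (∑ x, θk k x ^ 2) :=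
    fun k => Real.sqrt_pos.mpr (hS k)
  -- fbar is supported on the community
  have hfbar' : ∀ k i, fbar k i =
      if g i = k then θ i / Real.sqrt (∑ x, θk k x ^ 2) else 0 := by
    intro k i
    rw [hfbar, hθk]
    by_cases h : g i = k <;> simp [h]
  -- q ζ i = qb ζ (g i) * c i
  set c : Fin n → ℝ := fun i => θ i / Real.sqrt (∑ x, θk (g i) x ^ 2) with hc
  have hcpos : ∀ i, 0 < c i := fun i => div_pos (hθ i) (hsqrt (g i))
  have hqc : ∀ ζ i, q ζ i = qb ζ (g i) * c i := by
    intro ζ i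
    rw [hq]
    rw [Fintype.sum_eq_single (g i)]
    · rw [hfbar', if_pos rfl]
    · intro k hk
      rw [hfbar', if_neg (fun h => hk h.symm), mul_zero]
  -- column orthonormality of qb
  have hcol : ∀ k : Fin K, (∑ ω, qb ω k ^ 2) = 1 := by
    intro k
    have h1 : (Matrix.of qb) * (Matrix.of qb)ᵀ = 1 := by
      ext i j
      simp only [Matrix.mul_apply, Matrix.transpose_apply, Matrix.of_apply,
        Matrix.one_apply]
      exact hqbortho i j
    have h2 : (Matrix.of qb)ᵀ * (Matrix.of qb) = 1 := mul_eq_one_comm.mp h1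
    have := congrFun (congrFun h2 k) k
    simp only [Matrix.mul_apply, Matrix.transpose_apply, Matrix.of_apply,
      Matrix.one_apply_eq] at this
    rw [← this]
    exact Finset.sum_congr rfl (fun ω _ => pow_two _)
  -- the row norm equals c i
  have hnorm : ∀ i, Real.sqrt (∑ ω, q ω i ^ 2) = c i := by
    intro i
    have : (∑ ω, q ω i ^ 2) = c i ^ 2 := by
      have : (∑ ω, q ω i ^ 2) = (∑ ω, qb ω (g i) ^ 2) * c i ^ 2 := by
        rw [Finset.sum_mul]
        exact Finset.sum_congr rfl (fun ω _ => by rw [hqc, mul_pow])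
      rw [this, hcol, one_mul]
    rw [this, Real.sqrt_sq (hcpos i).le]
  have main : ∀ (i : Fin n) (k : Fin K), g i = k → ∀ ζ : Fin K, R ζ i = qb ζ k := by
    intro i k hik ζ
    rw [hR, hnorm, hqc, hik, mul_div_assoc, div_self (hcpos i).ne', mul_one]
  exact ⟨main, fun i j hij ζ => by
    rw [main i (g i) rfl ζ, main j (g j) rfl ζ, hij]⟩
end

section
/- Let n ≥ K ≥ 1, let g : {1,…,n} → {1,…,K} be surjective, let θ ∈ ℝⁿ have θ(i) > 0 for all i, set θ_k(i) = θ(i)·1{g(i)=k}, f̄_k = θ_k/‖θ_k‖, β_k = ‖θ_k‖²/‖θ‖², let P be a symmetric K×K real matrix, P̄_{k₁k₂} = √(β_{k₁}β_{k₂})P_{k₁k₂} with orthonormal eigenvectors q̄_1,…,q̄_K, define q_ζ = Σ_{k=1}^K q̄_ζ(k) f̄_k, and let υ_i ∈ ℝ^K denote the i-th row of the n×K matrix (q_1,…,q_K). Then every υ_i is nonzero, and for all i ≠ j: if g(i) = g(j) then υ_i/‖υ_i‖ = υ_j/‖υ_j‖, while if g(i) ≠ g(j) then ⟨υ_i/‖υ_i‖,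 υ_j/‖υ_j‖⟩ = 0 and hence ‖υ_i/‖υ_i‖ − υ_j/‖υ_j‖‖ = √2. -/
open Finset Matrix

/-- **Geometry of the rows of the population eigenvector matrix.** With `q` the transferred
orthonormal eigenvectors of the DCBM population matrix and `υ i = (q 1 i, …, q K i)` the `i`-th
row of the `n × K` eigenvector matrix: every row is nonzero; rows of nodes in the same community
have equal normalizations; rows of nodes in different communities have orthogonal
normalizations, hence at Euclidean distance `√2`. -/
theorem dcbm_population_row_geometry
    (n K : ℕ) (hK : 1 ≤ K) (hKn : K ≤ n)
    (g : Fin n → Fin K) (hg : Function.Surjective g)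
    (θ : Fin n → ℝ) (hθ : ∀ i, 0 < θ i)
    -- the restricted degree vectors, their normalizations and weights
    (θk : Fin K → Fin n → ℝ)
    (hθk : ∀ k i, θk k i = if g i = k then θ i else 0)
    (fbar : Fin K → Fin n → ℝ)
    (hfbar : ∀ k i, fbar k i = θk k i / Real.sqrt (∑ x, θk k x ^ 2))
    (β : Fin K → ℝ) (hβ : ∀ k, β k = (∑ x, θk k x ^ 2) / (∑ x, θ x ^ 2))
    -- the community-wise matrix and its rescaling
    (P : Matrix (Fin K) (Fin K) ℝ) (hPsymm : P.IsSymm)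
    (Pbar : Matrix (Fin K) (Fin K) ℝ)
    (hPbar : ∀ k₁ k₂, Pbar k₁ k₂ = Real.sqrt (β k₁ * β k₂) * P k₁ k₂)
    -- spectral decomposition of P̄ with orthonormal eigenvectors
    (lamb : Fin K → ℝ) (qb : Fin K → Fin K → ℝ)
    (hqbortho : ∀ i j, (∑ k, qb i k * qb j k) = if i = j then (1 : ℝ) else 0)
    (hdecomp : ∀ k₁ k₂, Pbar k₁ k₂ = ∑ i, lamb i * qb i k₁ * qb i k₂)
    -- the population eigenvectors
    (q : Fin K → Fin n → ℝ) (hq : ∀ i x, q i x = ∑ k, qb i k * fbar k x)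
    -- the rows of the n × K eigenvector matrix
    (υ : Fin n → Fin K → ℝ) (hυ : ∀ i ζ, υ i ζ = q ζ i) :
    (∀ i : Fin n, υ i ≠ 0) ∧
    (∀ i j : Fin n, i ≠ j →
      (g i = g j →
        (fun ζ => υ i ζ / Real.sqrt (∑ w, υ i w ^ 2)) =
        (fun ζ => υ j ζ / Real.sqrt (∑ w, υ j w ^ 2))) ∧
      (g i ≠ g j →
        (∑ ζ, (υ i ζ / Real.sqrt (∑ w, υ i w ^ 2)) * (υ j ζ / Real.sqrt (∑ w, υ j w ^ 2))) = 0 ∧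
        Real.sqrt (∑ ζ, (υ i ζ / Real.sqrt (∑ w, υ i w ^ 2) -
            υ j ζ / Real.sqrt (∑ w, υ j w ^ 2)) ^ 2) = Real.sqrt 2)) := by
 -- proof
  set S : Fin K → ℝ := fun k => ∑ x, θk k x ^ 2 with hS
  have hSpos : ∀ k, 0 < S k := by
    intro k
    obtain ⟨x, hx⟩ := hg k
    have hterm : 0 < θk k x ^ 2 := by
      rw [hθk, hx, if_pos rfl]
      exact pow_pos (hθ x) 2
    exact lt_of_lt_of_le hterm
      (Finset.single_le_sum (f := fun x => θk k x ^ 2) (fun i _ => sq_nonneg _)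
        (Finset.mem_univ x))
  set c : Fin n → ℝ := fun i => θ i / Real.sqrt (S (g i)) with hc
  have hcpos : ∀ i, 0 < c i := fun i => div_pos (hθ i) (Real.sqrt_pos.mpr (hSpos _))
  have hυ' : ∀ i ζ, υ i ζ = qb ζ (g i) * c i := by
    intro i ζ
    rw [hυ, hq]
    rw [Finset.sum_eq_single (g i)]
    · rw [hfbar, hθk, if_pos rfl]
    · intro k _ hk
      rw [hfbar, hθk, if_neg (fun h => hk h.symm)]
      simp
    · simp
  have hcol : ∀ a b : Fin K, (∑ ζ, qb ζ a * qb ζ b) = if a = b then (1:ℝ) else 0 := by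
    have h1 : (Matrix.of qb) * (Matrix.of qb)ᵀ = 1 := by
      ext i j
      simp [Matrix.mul_apply, Matrix.one_apply, hqbortho i j]
    have h2 : (Matrix.of qb)ᵀ * (Matrix.of qb) = 1 := mul_eq_one_comm.mp h1
    intro a b
    have := congrFun (congrFun h2 a) b
    simpa [Matrix.mul_apply, Matrix.one_apply] using this
  have hnorm : ∀ i, (∑ w, υ i w ^ 2) = c i ^ 2 := by
    intro i
    have e : (∑ w, υ i w ^ 2) = (∑ w, qb w (g i) * qb w (g i)) * c i ^ 2 := by
      rw [Finset.sum_mul]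
      refine Finset.sum_congr rfl fun w _ => ?_
      rw [hυ' i w]; ring
    rw [e, hcol]; simp
  have hsqrt : ∀ i, Real.sqrt (∑ w, υ i w ^ 2) = c i := by
    intro i; rw [hnorm, Real.sqrt_sq (hcpos i).le]
  have hrow : ∀ i ζ, υ i ζ / Real.sqrt (∑ w, υ i w ^ 2) = qb ζ (g i) := by
    intro i ζ
    rw [hsqrt, hυ', mul_div_assoc, div_self (hcpos i).ne', mul_one]
  refine ⟨?_, ?_⟩
  · intro i hzero
    have h1 := hnorm i
    rw [hzero] at h1
    simp at h1
    exact absurd h1.symm (pow_ne_zero 2 (hcpos i).ne')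
  · intro i j hij
    constructor
    · intro hgij
      funext ζ
      rw [hrow, hrow, hgij]
    · intro hgij
      constructor
      · simp only [hrow]
        rw [hcol, if_neg hgij]
      · simp only [hrow]
        have e : (∑ ζ, (qb ζ (g i) - qb ζ (g j)) ^ 2) = 2 := by
          have e2 : ∀ ζ : Fin K, (qb ζ (g i) - qb ζ (g j))^2 =
              qb ζ (g i)*qb ζ (g i) - 2*(qb ζ (g i)*qb ζ (g j)) + qb ζ (g j)*qb ζ (g j) :=
            fun ζ => by ring
          simp_rw [e2]
          rw [Finset.sum_add_distrib, Finset.sum_sub_distrib, ← Finset.mul_sum,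
            hcol, hcol, hcol, if_pos rfl, if_pos rfl, if_neg hgij]
          norm_num
        rw [e]
end
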